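/- arXiv:2202.03196 — 3 statements merged into one kernel-verified Lean document; each statement's English description precedes it below -/
import Mathlib

section
/- There is no AGM contraction operator ÷ that satisfies the postulate (DP3): if Ψ ÷ β ⊨ α then Ψ ÷ α ÷ β ⊨ α, over a propositional language with at least one non-tautological consistent formula. -/
inductive Form (V : Type) : Type
  | var : V → Form V
  | falsum : Form V
  | imp : Form V → Form V → Form V

namespace Form

def eval {V : Type} (w : V → Bool) : Form V → Bool
  | var v => w v
  | falsum => false
  | imp a b => !(eval w a) || eval w b

def neg {V : Type} (a : Form V) : Form V := imp a falsum

def top {V : Type} : Form V := neg falsum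

def conj {V : Type} (a b : Form V) : Form V := neg (imp a (neg b))

end Form

/-- Worlds (propositional interpretations) over the signature `V`. -/
abbrev World (V : Type) := V → Bool

/-- Models of a single formula. -/
def FMod {V : Type} (a : Form V) : Set (World V) := {w | a.eval w = true}

/-- Models of a set of formulas. -/
def SMod {V : Type} (X : Set (Form V)) : Set (World V) := {w | ∀ a ∈ X, a.eval w = true}

/-- Deductive closure (consequence operator). -/
def Cn {V : Type} (X : Set (Form V)) : Set (Form V) := {b | ∀ w ∈ SMod X, b.eval w = true}

/-- Minimal elements of a set of worlds w.r.t. a relation. -/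
def minSet {V : Type} (S : Set (World V)) (r : World V → World V → Prop) : Set (World V) :=
  {w ∈ S | ∀ w' ∈ S, r w w'}

/-- Total preorder: total (hence reflexive) and transitive. -/
def TotalPre {V : Type} (r : World V → World V → Prop) : Prop :=
  (∀ x y, r x y ∨ r y x) ∧ (∀ x y z, r x y → r y z → r x z)

/-- A belief change operator over epistemic states `E`: each state has a
deductively closed belief set, and the operator maps a state and a formula to a state. -/
structure BCO (V E : Type) where
  Bel : E → Set (Form V)
  closed : ∀ Ψ, Cn (Bel Ψ) = Bel Ψ
  op : E → Form V → E

/-- Models of (the belief set of) an epistemic state. -/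
def stMod {V E : Type} (O : BCO V E) (Ψ : E) : Set (World V) := SMod (O.Bel Ψ)

/-- Faithful assignment: each `le Ψ` is a total preorder; models of `Ψ` are mutually
equivalent and strictly below non-models. -/
def Faithful {V E : Type} (O : BCO V E) (le : E → World V → World V → Prop) : Prop :=
  (∀ Ψ, TotalPre (le Ψ)) ∧
  (∀ Ψ w₁ w₂, w₁ ∈ stMod O Ψ → w₂ ∈ stMod O Ψ → le Ψ w₁ w₂) ∧
  (∀ Ψ w₁ w₂, w₁ ∈ stMod O Ψ → w₂ ∉ stMod O Ψ → (le Ψ w₁ w₂ ∧ ¬ le Ψ w₂ w₁))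

/-- Contraction-compatibility: `[[Ψ ÷ α]] = [[Ψ]] ∪ min([[¬α]], ≤_Ψ)`. -/
def ContrCompat {V E : Type} (O : BCO V E) (le : E → World V → World V → Prop) : Prop :=
  ∀ Ψ (α : Form V), stMod O (O.op Ψ α) = stMod O Ψ ∪ minSet (FMod α.neg) (le Ψ)

/-- Revision-compatibility: `[[Ψ * α]] = min([[α]], ≤_Ψ)`. -/
def RevCompat {V E : Type} (O : BCO V E) (le : E → World V → World V → Prop) : Prop :=
  ∀ Ψ (α : Form V), stMod O (O.op Ψ α) = minSet (FMod α) (le Ψ)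

/-- The AGM contraction postulates (C1)–(C7) for epistemic states. -/
def AGMContr {V E : Type} (O : BCO V E) : Prop :=
  (∀ Ψ α, O.Bel (O.op Ψ α) ⊆ O.Bel Ψ) ∧
  (∀ Ψ α, α ∉ O.Bel Ψ → O.Bel Ψ ⊆ O.Bel (O.op Ψ α)) ∧
  (∀ Ψ (α : Form V), ¬ (∀ w, w ∈ FMod α) → α ∉ O.Bel (O.op Ψ α)) ∧
  (∀ Ψ α, O.Bel Ψ ⊆ Cn (O.Bel (O.op Ψ α) ∪ {α})) ∧
  (∀ Ψ α β, FMod α = FMod β → O.Bel (O.op Ψ α) = O.Bel (O.op Ψ β)) ∧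
  (∀ Ψ (α β : Form V), O.Bel (O.op Ψ α) ∩ O.Bel (O.op Ψ β) ⊆ O.Bel (O.op Ψ (α.conj β))) ∧
  (∀ Ψ (α β : Form V), β ∉ O.Bel (O.op Ψ (α.conj β)) → O.Bel (O.op Ψ (α.conj β)) ⊆ O.Bel (O.op Ψ β))

/-- Unbiasedness: every consistent set of formulas has an epistemic state whose
belief set is its deductive closure. -/
def Unbiased {V E : Type} (O : BCO V E) : Prop :=
  ∀ L : Set (Form V), (SMod L).Nonempty → ∃ Ψ : E, O.Bel Ψ = Cn L

/-!
Contracting by a tautology removes nothing: by recovery, `Bel Ψ ⊆ Cn (Bel (Ψ ÷ ⊤) ∪ {⊤})`, and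
adding `⊤` does not change the consequences. So (DP3) with `β = ⊤` turns any belief `α` of `Ψ`
into a belief of `Ψ ÷ α ÷ ⊤`, hence (inclusion) of `Ψ ÷ α`, which success forbids when `α` is
not a tautology. Unbiasedness provides a state believing such an `α`.
-/

def SatisfiesDP3 {V E : Type} (O : BCO V E) : Prop :=
  ∀ (Ψ : E) (α β : Form V), α ∈ O.Bel (O.op Ψ β) → α ∈ O.Bel (O.op (O.op Ψ α) β)

theorem mem_Cn_singleton_self {V : Type} (α : Form V) : α ∈ Cn {α} :=
  fun _ hw => hw α rfl

theorem SMod_singleton {V : Type} (α : Form V) : SMod {α} = FMod α := by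
  ext w
  simp [SMod, FMod]

theorem Cn_union_singleton_of_tautology {V : Type} (X : Set (Form V)) {β : Form V}
    (hβ : ∀ w, w ∈ FMod β) : Cn (X ∪ {β}) = Cn X := by
  have hmod : SMod (X ∪ {β}) = SMod X := by
    ext w
    simp [SMod, show β.eval w = true from hβ w]
  simp only [Cn, hmod]

namespace BCO

variable {V E : Type} (O : BCO V E)

theorem Bel_subset_Bel_op_of_tautology
    (hrecovery : ∀ Ψ α, O.Bel Ψ ⊆ Cn (O.Bel (O.op Ψ α) ∪ {α}))
    (Ψ : E) {β : Form V} (hβ : ∀ w, w ∈ FMod β) : O.Bel Ψ ⊆ O.Bel (O.op Ψ β) := by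
  have h := hrecovery Ψ β
  rwa [Cn_union_singleton_of_tautology _ hβ, O.closed] at h

theorem not_mem_Bel_of_satisfiesDP3 (hA : AGMContr O) (hDP : SatisfiesDP3 O) (Ψ : E)
    {α : Form V} (hα : ¬ ∀ w, w ∈ FMod α) : α ∉ O.Bel Ψ := by
  obtain ⟨hinclusion, -, hsuccess, hrecovery, -⟩ := hA
  intro hαΨ
  have htop : ∀ w, w ∈ FMod (Form.top : Form V) := fun _ => rfl
  have hαtop : α ∈ O.Bel (O.op Ψ Form.top) :=
    O.Bel_subset_Bel_op_of_tautology hrecovery Ψ htop hαΨ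
  have hαα : α ∈ O.Bel (O.op Ψ α) := hinclusion _ Form.top (hDP Ψ α Form.top hαtop)
  exact hsuccess Ψ α hα hαα

end BCO

theorem stmt_7_general {V E : Type} (O : BCO V E)
    (hex : ∃ α : Form V, (FMod α).Nonempty ∧ ¬ (∀ w, w ∈ FMod α))
    (hA : AGMContr O) (hU : Unbiased O) :
    ¬ (∀ (Ψ : E) (α β : Form V),
        α ∈ O.Bel (O.op Ψ β) → α ∈ O.Bel (O.op (O.op Ψ α) β)) := by
  intro hDP
  obtain ⟨α, hconsistent, hα⟩ := hex
  obtain ⟨Ψ, hΨ⟩ := hU {α} (SMod_singleton α ▸ hconsistent)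
  exact O.not_mem_Bel_of_satisfiesDP3 hA hDP Ψ hα (hΨ ▸ mem_Cn_singleton_self α)

/-- no AGM contraction operator over an unbiased set of epistemic
states satisfies (DP3), provided some formula is consistent and non-tautological. -/
theorem stmt_7 {V E : Type} [Fintype V] (O : BCO V E)
    (hex : ∃ α : Form V, (FMod α).Nonempty ∧ ¬ (∀ w, w ∈ FMod α))
    (hA : AGMContr O) (hU : Unbiased O) :
    ¬ (∀ (Ψ : E) (α β : Form V),
        α ∈ O.Bel (O.op Ψ β) → α ∈ O.Bel (O.op (O.op Ψ α) β)) :=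
  stmt_7_general O hex hA hU
end

section
/- Let ÷ be an AGM contraction operator with contraction-compatible faithful assignment Ψ ↦ ≤_Ψ. Then ÷ satisfies (DP4): if Ψ ÷ β ⊭ ¬α then Ψ ÷ α ÷ β ⊭ ¬α, if and only if the assignment satisfies: whenever ω₁ ⊨ α, ω₂ ⊨ ¬α, and [[Ψ]] ⊆ [[¬α]], then ω₁ ≤_Ψ ω₂ implies ω₁ ≤_{Ψ÷α} ω₂. -/
/-!
Over a finite signature every set of worlds is definable, which is what makes (DP4) strong
enough to recover (IR4).

(DP4) ⇒ (IR4): choose `β` with `[[¬β]] = {ω₁, ω₂}`. Then `ω₁ ≤_Ψ ω₂` puts `ω₁` into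
`[[Ψ ÷ β]]`, so (DP4) yields a model of `α` in
`[[Ψ ÷ α ÷ β]] = [[Ψ ÷ α]] ∪ min({ω₁, ω₂}, ≤_{Ψ÷α})`. Since `[[Ψ]] ⊆ [[¬α]]` also
`[[Ψ ÷ α]] ⊆ [[¬α]]`, so this model is `ω₁`, minimal in `{ω₁, ω₂}`: `ω₁ ≤_{Ψ÷α} ω₂`.

(IR4) ⇒ (DP4): a model of `α` in `[[Ψ]]` survives both contractions. Otherwise the model `ω`
of `α` in `[[Ψ ÷ β]]` is `≤_Ψ`-minimal in `[[¬β]]`. Let `μ` be `≤_{Ψ÷α}`-minimal in `[[¬β]]`;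
either `μ ⊨ α`, or (IR4) lifts `ω ≤_Ψ μ` to `ω ≤_{Ψ÷α} μ` and `ω` is `≤_{Ψ÷α}`-minimal too.
-/

namespace Form

variable {V : Type}

def disj (a b : Form V) : Form V := imp (neg a) b

@[simp] lemma eval_neg (a : Form V) (w : World V) : a.neg.eval w = !a.eval w := by
  simp [neg, eval]

@[simp] lemma eval_conj (a b : Form V) (w : World V) :
    (a.conj b).eval w = (a.eval w && b.eval w) := by
  simp [conj, neg, eval]

@[simp] lemma eval_disj (a b : Form V) (w : World V) :
    (a.disj b).eval w = (a.eval w || b.eval w) := by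
  simp [disj, neg, eval]

@[simp] lemma eval_top (w : World V) : (top : Form V).eval w = true := by
  simp [top, eval]

end Form

open Form

section Definability

variable {V : Type}

lemma mem_fMod {a : Form V} {w : World V} : w ∈ FMod a ↔ a.eval w = true := Iff.rfl

@[simp] lemma mem_fMod_neg {a : Form V} {w : World V} : w ∈ FMod a.neg ↔ w ∉ FMod a := by
  simp [mem_fMod]

lemma fMod_neg (a : Form V) : FMod a.neg = (FMod a)ᶜ := by
  ext w; exact mem_fMod_neg

lemma exists_fMod_eq_agreeOn (ω : World V) (s : Finset V) :
    ∃ a : Form V, FMod a = {w | ∀ v ∈ s, w v = ω v} := by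
  classical
  induction s using Finset.induction_on with
  | empty => exact ⟨top, by ext w; simp [FMod]⟩
  | insert v s _ ih =>
    obtain ⟨a, ha⟩ := ih
    refine ⟨a.conj (if ω v then var v else (var v).neg), ?_⟩
    ext w
    simp only [Set.ext_iff, mem_fMod, Set.mem_ofPred_eq] at ha
    cases h : ω v <;> simp [mem_fMod, eval, ha, h, and_comm]

lemma exists_fMod_eq_singleton [Fintype V] (ω : World V) : ∃ a : Form V, FMod a = {ω} := by
  obtain ⟨a, ha⟩ := exists_fMod_eq_agreeOn ω Finset.univ
  exact ⟨a, by rw [ha]; ext w; simp [funext_iff]⟩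

lemma exists_fMod_eq [Fintype V] (S : Set (World V)) : ∃ a : Form V, FMod a = S := by
  induction S, S.toFinite using Set.Finite.induction_on with
  | empty => exact ⟨falsum, by ext w; simp [FMod, eval]⟩
  | @insert ω S _ _ ih =>
    obtain ⟨a, ha⟩ := ih
    obtain ⟨b, hb⟩ := exists_fMod_eq_singleton ω
    refine ⟨b.disj a, ?_⟩
    ext w
    simp only [Set.ext_iff, mem_fMod] at ha hb
    simp [mem_fMod, ha, hb]

end Definability

lemma minSet_nonempty {V : Type} [Finite V] {S : Set (World V)} {r : World V → World V → Prop}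
    (hr : TotalPre r) (hS : S.Nonempty) : (minSet S r).Nonempty := by
  let lt : World V → World V → Prop := fun x y => r x y ∧ ¬ r y x
  have : IsTrans _ lt :=
    ⟨fun x y z hxy hyz => ⟨hr.2 _ _ _ hxy.1 hyz.1, fun hzx => hxy.2 (hr.2 _ _ _ hyz.1 hzx)⟩⟩
  have : Std.Irrefl lt := ⟨fun x h => h.2 h.1⟩
  obtain ⟨m, hm, hmin⟩ := (Finite.wellFounded_of_trans_of_irrefl lt).has_min S hS
  exact ⟨m, hm, fun x hx => by_contra fun h => hmin x hx ⟨(hr.1 m x).resolve_left h, h⟩⟩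

section Contraction

variable {V E : Type} {O : BCO V E} {le : E → World V → World V → Prop}

def SatisfiesDP4 (O : BCO V E) : Prop :=
  ∀ (Ψ : E) (α β : Form V), α.neg ∉ O.Bel (O.op Ψ β) → α.neg ∉ O.Bel (O.op (O.op Ψ α) β)

def SatisfiesIR4 (O : BCO V E) (le : E → World V → World V → Prop) : Prop :=
  ∀ (Ψ : E) (α : Form V) (ω₁ ω₂ : World V),
    ω₁ ∈ FMod α → ω₂ ∈ FMod α.neg → stMod O Ψ ⊆ FMod α.neg → le Ψ ω₁ ω₂ → le (O.op Ψ α) ω₁ ω₂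

lemma neg_notMem_bel_iff (Φ : E) (α : Form V) :
    α.neg ∉ O.Bel Φ ↔ ∃ w ∈ stMod O Φ, w ∈ FMod α := by
  rw [← O.closed Φ]
  simp [Cn, stMod, FMod]

lemma stMod_subset_stMod_op (hC : ContrCompat O le) (Ψ : E) (α : Form V) :
    stMod O Ψ ⊆ stMod O (O.op Ψ α) := by
  rw [hC]; exact Set.subset_union_left

lemma stMod_op_subset_of_subset (hC : ContrCompat O le) {Ψ : E} {α : Form V}
    (h : stMod O Ψ ⊆ FMod α.neg) : stMod O (O.op Ψ α) ⊆ FMod α.neg := by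
  rw [hC]; exact Set.union_subset h fun _ hw => hw.1

lemma satisfiesIR4_of_satisfiesDP4 [Fintype V] (hT : ∀ Ψ, TotalPre (le Ψ)) (hC : ContrCompat O le)
    (hDP : SatisfiesDP4 O) : SatisfiesIR4 O le := by
  intro Ψ α ω₁ ω₂ h₁ h₂ hΨ hle
  obtain ⟨β, hβ⟩ := exists_fMod_eq ({ω₁, ω₂}ᶜ : Set (World V))
  have hβneg : FMod β.neg = {ω₁, ω₂} := by rw [fMod_neg, hβ, compl_compl]
  have hω₁ : ω₁ ∈ minSet (FMod β.neg) (le Ψ) := by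
    refine ⟨by simp [hβneg], ?_⟩
    rw [hβneg]
    rintro w (rfl | rfl)
    · exact ((hT Ψ).1 w w).elim id id
    · exact hle
  obtain ⟨w, hw, hwα⟩ := (neg_notMem_bel_iff _ α).1 <|
    hDP Ψ α β <| (neg_notMem_bel_iff _ α).2 ⟨ω₁, by rw [hC]; exact Or.inr hω₁, h₁⟩
  rw [hC] at hw
  rcases hw with hw | ⟨hwβ, hwmin⟩
  · exact (mem_fMod_neg.1 (stMod_op_subset_of_subset hC hΨ hw) hwα).elim
  · rw [hβneg] at hwβ hwmin
    rcases hwβ with rfl | rfl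
    · exact hwmin ω₂ (by simp)
    · exact (mem_fMod_neg.1 h₂ hwα).elim

lemma satisfiesDP4_of_satisfiesIR4 [Finite V] (hT : ∀ Ψ, TotalPre (le Ψ)) (hC : ContrCompat O le)
    (hIR : SatisfiesIR4 O le) : SatisfiesDP4 O := by
  intro Ψ α β hpre
  rw [neg_notMem_bel_iff] at hpre ⊢
  obtain ⟨ω, hω, hωα⟩ := hpre
  by_cases hΨ : stMod O Ψ ⊆ FMod α.neg
  · have hωmin : ω ∈ minSet (FMod β.neg) (le Ψ) := by
      rw [hC] at hω
      exact hω.resolve_left fun h => mem_fMod_neg.1 (hΨ h) hωα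
    obtain ⟨μ, hμβ, hμmin⟩ := minSet_nonempty (hT (O.op Ψ α)) ⟨ω, hωmin.1⟩
    simp_rw [hC (O.op Ψ α)]
    by_cases hμα : μ ∈ FMod α
    · exact ⟨μ, Or.inr ⟨hμβ, hμmin⟩, hμα⟩
    · have hωμ := hIR Ψ α ω μ hωα (mem_fMod_neg.2 hμα) hΨ (hωmin.2 μ hμβ)
      exact ⟨ω, Or.inr ⟨hωmin.1, fun w hw => (hT _).2 _ _ _ hωμ (hμmin w hw)⟩, hωα⟩
  · obtain ⟨w, hw, hwα⟩ := Set.not_subset.1 hΨ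
    refine ⟨w, stMod_subset_stMod_op hC _ β (stMod_subset_stMod_op hC Ψ α hw), ?_⟩
    simpa using hwα

end Contraction

theorem stmt_8_general {V E : Type} [Fintype V] (O : BCO V E)
    (le : E → World V → World V → Prop)
    (hF : Faithful O le) (hC : ContrCompat O le) :
    (∀ (Ψ : E) (α β : Form V),
        α.neg ∉ O.Bel (O.op Ψ β) → α.neg ∉ O.Bel (O.op (O.op Ψ α) β)) ↔
    (∀ (Ψ : E) (α : Form V) (ω₁ ω₂ : World V),
        ω₁ ∈ FMod α → ω₂ ∈ FMod α.neg → stMod O Ψ ⊆ FMod α.neg →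
          le Ψ ω₁ ω₂ → le (O.op Ψ α) ω₁ ω₂) :=
  ⟨satisfiesIR4_of_satisfiesDP4 hF.1 hC, satisfiesDP4_of_satisfiesIR4 hF.1 hC⟩

/-- (DP4) holds iff the assignment satisfies (IR4ʳᵉˡ_÷). -/
theorem stmt_8 {V E : Type} [Fintype V] (O : BCO V E)
    (le : E → World V → World V → Prop)
    (hA : AGMContr O) (hF : Faithful O le) (hC : ContrCompat O le)
    (hU : Unbiased O) :
    (∀ (Ψ : E) (α β : Form V),
        α.neg ∉ O.Bel (O.op Ψ β) → α.neg ∉ O.Bel (O.op (O.op Ψ α) β)) ↔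
    (∀ (Ψ : E) (α : Form V) (ω₁ ω₂ : World V),
        ω₁ ∈ FMod α → ω₂ ∈ FMod α.neg → stMod O Ψ ⊆ FMod α.neg →
          le Ψ ω₁ ω₂ → le (O.op Ψ α) ω₁ ω₂) :=
  stmt_8_general O le hF hC
end

section
/- Let ÷ be an AGM contraction operator with contraction-compatible faithful assignment Ψ ↦ ≤_Ψ. Then ÷ satisfies (IC3_sa): if Ψ ÷ β ⊨ ¬α then Ψ ÷ α ÷ β ⊨ ¬α, if and only if the assignment satisfies: whenever ω₁ ⊨ ¬α, ω₂ ⊨ α, and [[Ψ]] ⊆ [[¬α]], then ω₁ <_Ψ ω₂ implies ω₁ <_{Ψ÷α} ω₂. -/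
/-!
Contraction-compatibility gives `[[Ψ ÷ α ÷ β]] = [[Ψ ÷ α]] ∪ min([[¬β]], ≤_{Ψ÷α})`, so (IC3_sa)
says: if `[[Ψ]] ⊨ ¬α` and the `≤_Ψ`-minimal `¬β`-worlds satisfy `¬α`, then so do the
`≤_{Ψ÷α}`-minimal ones. Over a finite signature every set of worlds is `[[¬β]]` for some `β`;
taking `[[¬β]] = {ω₁, ω₂}` turns (IC3_sa) into the preservation of `ω₁ <_Ψ ω₂`. Conversely, if a
`≤_{Ψ÷α}`-minimal `¬β`-world `ω` satisfied `α`, a `≤_Ψ`-minimal `¬β`-world would lie strictly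
`≤_Ψ`-below `ω` and satisfy `¬α`, hence stay strictly below `ω` for `≤_{Ψ÷α}`.
-/

open Set

variable {V E : Type}

namespace Form

lemma FMod_var (v : V) : FMod (var v) = {w | w v = true} := rfl

lemma FMod_neg (a : Form V) : FMod a.neg = (FMod a)ᶜ := by
  ext w
  simp [FMod, neg, eval]

lemma FMod_top : FMod (top : Form V) = univ := by
  ext w
  simp [top, FMod, neg, eval]

lemma FMod_conj (a b : Form V) : FMod (a.conj b) = FMod a ∩ FMod b := by
  simp only [conj, FMod_neg]
  ext w
  simp [FMod, eval, neg]

end Form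

open Form

def Definable (S : Set (World V)) : Prop := ∃ φ : Form V, FMod φ = S

lemma Definable.compl {S : Set (World V)} (hS : Definable S) : Definable Sᶜ :=
  let ⟨φ, hφ⟩ := hS; ⟨φ.neg, by rw [FMod_neg, hφ]⟩

lemma Definable.inter {S T : Set (World V)} (hS : Definable S) (hT : Definable T) :
    Definable (S ∩ T) :=
  let ⟨φ, hφ⟩ := hS; let ⟨ψ, hψ⟩ := hT; ⟨φ.conj ψ, by rw [FMod_conj, hφ, hψ]⟩

lemma Definable.biInter_finset {ι : Type*} (s : Finset ι) {f : ι → Set (World V)}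
    (hf : ∀ i ∈ s, Definable (f i)) : Definable (⋂ i ∈ s, f i) := by
  classical
  induction s using Finset.induction_on with
  | empty => exact ⟨top, by simp [FMod_top]⟩
  | insert i s _ ih =>
    rw [Finset.set_biInter_insert]
    exact (hf i (s.mem_insert_self i)).inter (ih fun j hj => hf j (Finset.mem_insert_of_mem hj))

lemma Definable.iInter {ι : Type*} [Finite ι] {f : ι → Set (World V)}
    (hf : ∀ i, Definable (f i)) : Definable (⋂ i, f i) := by
  have := Fintype.ofFinite ι
  simpa using Definable.biInter_finset Finset.univ fun i _ => hf i

lemma definable_singleton [Finite V] (u : World V) : Definable {u} := by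
  have hu : ({u} : Set (World V)) = ⋂ v, {w | w v = u v} := by
    ext w
    simp [funext_iff]
  rw [hu]
  refine Definable.iInter fun v => ?_
  cases h : u v
  · exact ⟨(var v).neg, by ext w; simp [FMod_neg, FMod_var]⟩
  · exact ⟨var v, rfl⟩

lemma definable_of_finite [Finite V] (S : Set (World V)) : Definable S := by
  have hS : S = ⋂ u : ↥Sᶜ, ({(u : World V)} : Set (World V))ᶜ := by
    ext w
    simp only [mem_iInter, mem_compl_iff, mem_singleton_iff, Subtype.forall]
    exact ⟨fun hw u hu hwu => hu (hwu ▸ hw), fun h => by_contra fun hw => h w hw rfl⟩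
  rw [hS]
  exact Definable.iInter fun u => (definable_singleton (u : World V)).compl

lemma minSet_subset (S : Set (World V)) (r : World V → World V → Prop) : minSet S r ⊆ S :=
  fun _ hw => hw.1

namespace TotalPre

variable {r : World V → World V → Prop}

lemma refl (hr : TotalPre r) (x : World V) : r x x :=
  (hr.1 x x).elim id id

lemma le_of_not_le (hr : TotalPre r) {x y : World V} (h : ¬ r y x) : r x y :=
  (hr.1 x y).resolve_right h

lemma minSet_nonempty [Finite V] (hr : TotalPre r) {S : Set (World V)} (hS : S.Nonempty) :
    (minSet S r).Nonempty := by
  let lt : World V → World V → Prop := fun x y => r x y ∧ ¬ r y x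
  have : IsTrans (World V) lt :=
    ⟨fun x y z hxy hyz => ⟨hr.2 x y z hxy.1 hyz.1, fun hzx => hxy.2 (hr.2 y z x hyz.1 hzx)⟩⟩
  have : Std.Irrefl lt := ⟨fun x hx => hx.2 hx.1⟩
  obtain ⟨m, hm, hmin⟩ := (Finite.wellFounded_of_trans_of_irrefl lt).has_min S hS
  exact ⟨m, hm, fun y hy => by_contra fun hmy => hmin y hy ⟨hr.le_of_not_le hmy, hmy⟩⟩

lemma mem_minSet_pair_right_iff (hr : TotalPre r) {a b : World V} :
    b ∈ minSet {a, b} r ↔ r b a := by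
  refine ⟨fun hb => hb.2 a (mem_insert a _), fun hba => ⟨mem_insert_of_mem a rfl, ?_⟩⟩
  rintro w (rfl | rfl)
  exacts [hba, hr.refl w]

lemma minSet_subset_of_lt_imp_not_le [Finite V] (hr : TotalPre r)
    {r' : World V → World V → Prop} {S T : Set (World V)} (hT : minSet S r ⊆ T)
    (hlt : ∀ x ∈ T, ∀ y ∉ T, r x y ∧ ¬ r y x → ¬ r' y x) : minSet S r' ⊆ T := by
  intro w hw
  by_contra hwT
  obtain ⟨m, hm⟩ := hr.minSet_nonempty ⟨w, hw.1⟩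
  have hwm : ¬ r w m := fun hwm =>
    hwT (hT ⟨hw.1, fun x hx => hr.2 w m x hwm (hm.2 x hx)⟩)
  exact hlt m (hT hm) w hwT ⟨hm.2 w hw.1, hwm⟩ (hw.2 m hm.1)

end TotalPre

lemma BCO.mem_Bel_iff (O : BCO V E) (Ψ : E) (φ : Form V) :
    φ ∈ O.Bel Ψ ↔ stMod O Ψ ⊆ FMod φ := by
  refine ⟨fun h w hw => hw φ h, fun h => ?_⟩
  rw [← O.closed Ψ]
  exact fun w hw => h hw

section Contraction

variable {O : BCO V E} {le : E → World V → World V → Prop}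

lemma ContrCompat.mem_Bel_op_iff (hC : ContrCompat O le) {Ψ : E} {β φ : Form V} :
    φ ∈ O.Bel (O.op Ψ β) ↔
      stMod O Ψ ⊆ FMod φ ∧ minSet (FMod β.neg) (le Ψ) ⊆ FMod φ := by
  rw [O.mem_Bel_iff, hC, union_subset_iff]

def IC3sa (O : BCO V E) : Prop :=
  ∀ (Ψ : E) (α β : Form V), α.neg ∈ O.Bel (O.op Ψ β) → α.neg ∈ O.Bel (O.op (O.op Ψ α) β)

def IC3relWeak (O : BCO V E) (le : E → World V → World V → Prop) : Prop :=
  ∀ (Ψ : E) (α : Form V) (ω₁ ω₂ : World V),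
    ω₁ ∈ FMod α.neg → ω₂ ∈ FMod α → stMod O Ψ ⊆ FMod α.neg →
      (le Ψ ω₁ ω₂ ∧ ¬ le Ψ ω₂ ω₁) → (le (O.op Ψ α) ω₁ ω₂ ∧ ¬ le (O.op Ψ α) ω₂ ω₁)

variable (hC : ContrCompat O le) (hT : ∀ Ψ, TotalPre (le Ψ))
include hC hT

lemma IC3relWeak_of_IC3sa [Finite V] (h : IC3sa O) : IC3relWeak O le := by
  intro Ψ α ω₁ ω₂ h₁ h₂ hΨ hlt
  obtain ⟨β, hβ⟩ := definable_of_finite ({ω₁, ω₂}ᶜ : Set (World V))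
  have hβneg : FMod β.neg = {ω₁, ω₂} := by rw [FMod_neg, hβ, compl_compl]
  have hpre : α.neg ∈ O.Bel (O.op Ψ β) := by
    refine hC.mem_Bel_op_iff.2 ⟨hΨ, ?_⟩
    rw [hβneg]
    rintro w hw
    rcases hw.1 with rfl | rfl
    · exact h₁
    · exact absurd ((hT Ψ).mem_minSet_pair_right_iff.1 hw) hlt.2
  have hpost := (hC.mem_Bel_op_iff.1 (h Ψ α β hpre)).2
  rw [hβneg] at hpost
  have hnot : ¬ le (O.op Ψ α) ω₂ ω₁ := fun hle => by
    simpa [FMod_neg, h₂] using hpost ((hT _).mem_minSet_pair_right_iff.2 hle)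
  exact ⟨(hT _).le_of_not_le hnot, hnot⟩

lemma IC3sa_of_IC3relWeak [Finite V] (h : IC3relWeak O le) : IC3sa O := by
  intro Ψ α β hb
  obtain ⟨hΨ, hmin⟩ := hC.mem_Bel_op_iff.1 hb
  refine hC.mem_Bel_op_iff.2 ⟨?_, ?_⟩
  · rw [hC]
    exact union_subset hΨ (minSet_subset _ _)
  · refine (hT Ψ).minSet_subset_of_lt_imp_not_le hmin fun x hx y hy hxy => ?_
    rw [FMod_neg, notMem_compl_iff] at hy
    exact (h Ψ α x y hx hy hΨ hxy).2

end Contraction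

theorem stmt_12_general {V E : Type} [Fintype V] (O : BCO V E)
    (le : E → World V → World V → Prop)
    (hF : Faithful O le) (hC : ContrCompat O le) :
    (∀ (Ψ : E) (α β : Form V),
        α.neg ∈ O.Bel (O.op Ψ β) → α.neg ∈ O.Bel (O.op (O.op Ψ α) β)) ↔
    (∀ (Ψ : E) (α : Form V) (ω₁ ω₂ : World V),
        ω₁ ∈ FMod α.neg → ω₂ ∈ FMod α → stMod O Ψ ⊆ FMod α.neg →
          (le Ψ ω₁ ω₂ ∧ ¬ le Ψ ω₂ ω₁) →
            (le (O.op Ψ α) ω₁ ω₂ ∧ ¬ le (O.op Ψ α) ω₂ ω₁)) :=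
  ⟨IC3relWeak_of_IC3sa hC hF.1, IC3sa_of_IC3relWeak hC hF.1⟩

/-- (IC3_sa) holds iff the assignment satisfies (IC3ʳᵉˡ_weak). -/
theorem stmt_12 {V E : Type} [Fintype V] (O : BCO V E)
    (le : E → World V → World V → Prop)
    (hA : AGMContr O) (hF : Faithful O le) (hC : ContrCompat O le) :
    (∀ (Ψ : E) (α β : Form V),
        α.neg ∈ O.Bel (O.op Ψ β) → α.neg ∈ O.Bel (O.op (O.op Ψ α) β)) ↔
    (∀ (Ψ : E) (α : Form V) (ω₁ ω₂ : World V),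
        ω₁ ∈ FMod α.neg → ω₂ ∈ FMod α → stMod O Ψ ⊆ FMod α.neg →
          (le Ψ ω₁ ω₂ ∧ ¬ le Ψ ω₂ ω₁) →
            (le (O.op Ψ α) ω₁ ω₂ ∧ ¬ le (O.op Ψ α) ω₂ ω₁)) :=
  stmt_12_general O le hF hC
end
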